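/- arXiv:2410.03033 — 3 statements merged into one kernel-verified Lean document; each statement's English description precedes it below -/
import Mathlib

section
/- Let K be a field admitting an element n_K ∈ K that is not a square, let p ∈ K[x̄, ȳ] and q ∈ K[z̄] be polynomials. Then '(there exists x̄ such that for all ȳ, p(x̄,ȳ) ≠ 0) or (there exists z̄ with q(z̄) = 0)' holds if and only if 'there exist x̄, z̄ such that for all ȳ and all u ∈ K, p(x̄,ȳ)² − n_K·(u·q(z̄) − 1)² ≠ 0'. -/
lemma key {K : Type*} [Field K] {nK a b : K} (hnK : ¬IsSquare nK)
    (hb : b ≠ 0) : a ^ 2 - nK * b ^ 2 ≠ 0 := by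
  intro h
  apply hnK
  refine ⟨a / b, ?_⟩
  field_simp
  linear_combination -h

/-- For a field `K` with a non-square `n_K`, and polynomials `p ∈ K[x̄,ȳ]`, `q ∈ K[z̄]`:
`[∃x̄ ∀ȳ (p ≠ 0)] ∨ [∃z̄ (q = 0)]` iff
`∃x̄ ∃z̄ ∀ȳ ∀u, p(x̄,ȳ)² − n_K·(u·q(z̄) − 1)² ≠ 0`. -/
theorem stmt_11 {K : Type*} [Field K] (nK : K) (hnK : ¬IsSquare nK)
    {m r l : ℕ} (p : MvPolynomial (Fin m ⊕ Fin r) K) (q : MvPolynomial (Fin l) K) :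
    ((∃ x : Fin m → K, ∀ y : Fin r → K,
        MvPolynomial.eval (Sum.elim x y) p ≠ 0) ∨
      (∃ z : Fin l → K, MvPolynomial.eval z q = 0)) ↔
      ∃ (x : Fin m → K) (z : Fin l → K), ∀ (y : Fin r → K) (u : K),
        (MvPolynomial.eval (Sum.elim x y) p) ^ 2 -
            nK * (u * MvPolynomial.eval z q - 1) ^ 2 ≠ 0 := by
  constructor
  · rintro (⟨x, hx⟩ | ⟨z, hz⟩)
    · refine ⟨x, 0, fun y u h => ?_⟩
      rcases eq_or_ne (u * MvPolynomial.eval 0 q - 1) 0 with hb | hb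
      · rw [hb] at h
        simp at h
        exact hx y h
      · exact key hnK hb h
    · refine ⟨0, z, fun y u => ?_⟩
      rw [hz]
      have : u * (0:K) - 1 = -1 := by ring
      rw [this]
      exact key hnK (by norm_num)
  · rintro ⟨x, z, h⟩
    by_contra hc
    push_neg at hc
    obtain ⟨h1, h2⟩ := hc
    obtain ⟨y, hy⟩ := h1 x
    have hq := h2 z
    have := h y (MvPolynomial.eval z q)⁻¹
    apply this
    rw [hy, inv_mul_cancel₀ hq]
    ring
end

section
/- Let K be a field, n ≥ 1 an integer, and R ⊆ K a unique factorization domain with fraction field K in which any two elements have a gcd expressible as an R-linear combination (e.g., R a PID). Then for x ∈ K×: x can be written as x = y/zⁿ with y, z ∈ R and gcd(y,z) = 1 if and only if for every prime element p of R, v_p(x) ∈ ℤ_{≥0} ∪ nℤ. -/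
private lemma aux_multiset {α : Type*} [DecidableEq α] (s : Multiset α) (n : ℕ)
    (h : ∀ a ∈ s, n ∣ s.count a) : ∃ t, s = n • t := by
  refine ⟨∑ a ∈ s.toFinset, (s.count a / n) • ({a} : Multiset α), ?_⟩
  rw [Finset.smul_sum]
  conv_lhs => rw [← Multiset.toFinset_sum_count_nsmul_eq s]
  refine Finset.sum_congr rfl fun a ha => ?_
  rw [smul_smul, Nat.mul_div_cancel' (h a (Multiset.mem_toFinset.mp ha))]

private lemma aux_pow {R : Type*} [CommRing R] [IsDomain R] [UniqueFactorizationMonoid R]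
    (n : ℕ) (b : R) (hb : b ≠ 0)
    (h : ∀ p : R, Prime p → ∀ m : ℕ, p ^ m ∣ b → ¬ p ^ (m + 1) ∣ b → n ∣ m) :
    ∃ u z : R, IsUnit u ∧ b = u * z ^ n := by
  classical
  letI := UniqueFactorizationMonoid.normalizationMonoid (α := R)
  set s := UniqueFactorizationMonoid.normalizedFactors b with hs
  have hcount : ∀ p ∈ s, n ∣ s.count p := by
    intro p hp
    have hprime := UniqueFactorizationMonoid.prime_of_normalized_factor p hp
    have hnorm := UniqueFactorizationMonoid.normalize_normalized_factor p hp
    have hmul : emultiplicity p b = (s.count p : ℕ∞) := by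
      rw [UniqueFactorizationMonoid.emultiplicity_eq_count_normalizedFactors
        hprime.irreducible hb, hnorm]
    obtain ⟨h1, h2⟩ := emultiplicity_eq_coe.mp hmul
    exact h p hprime _ h1 h2
  obtain ⟨t, ht⟩ := aux_multiset s n hcount
  obtain ⟨u, hu⟩ := UniqueFactorizationMonoid.prod_normalizedFactors hb
  exact ⟨u, t.prod, u.isUnit, by rw [← hu, ← hs, ht, Multiset.prod_nsmul, mul_comm]⟩

/-- Let `R` be a unique factorization domain with fraction field `K` in which any
two elements have a gcd expressible as an `R`-linear combination.  For `x ∈ K×`: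
`x = y/zⁿ` for some coprime `y, z ∈ R` (i.e. `y, z` generate the unit ideal) iff
for every prime element `p` of `R` the valuation `v_p(x)` is nonnegative or
divisible by `n`.  (Here `v_p(x)` is encoded via a fraction representation
`x = a/b` with `a, b` not both divisible by `p`, and `m = v_p(b)` the exact
power of `p` dividing `b`; the condition `v_p(x) ∈ ℤ_{≥0} ∪ nℤ` is then
`m = 0 ∨ n ∣ m`.) -/
theorem stmt_14 {R K : Type*} [CommRing R] [IsDomain R] [UniqueFactorizationMonoid R]
    [Field K] [Algebra R K] [IsFractionRing R K]
    (hgcd : ∀ y z : R, ∃ d s t : R, d = s * y + t * z ∧ d ∣ y ∧ d ∣ z ∧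
      ∀ e : R, e ∣ y → e ∣ z → e ∣ d)
    (n : ℕ) (hn : 1 ≤ n) (x : K) (hx : x ≠ 0) :
    (∃ y z : R, (∃ s t : R, s * y + t * z = 1) ∧
        x * (algebraMap R K z) ^ n = algebraMap R K y) ↔
      ∀ p : R, Prime p → ∀ a b : R, b ≠ 0 → ¬(p ∣ a ∧ p ∣ b) →
        x * algebraMap R K b = algebraMap R K a →
        ∀ m : ℕ, p ^ m ∣ b → ¬p ^ (m + 1) ∣ b → (m = 0 ∨ n ∣ m) := by
  have hn0 : n ≠ 0 := by omega
  have inj : Function.Injective (algebraMap R K) := IsFractionRing.injective R K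
  constructor
  · rintro ⟨y, z, ⟨s, t, hst⟩, hxz⟩ p hp a b hb hpab hxb m hm1 hm2
    by_cases hm0 : m = 0
    · exact Or.inl hm0
    right
    have hz : z ≠ 0 := by
      rintro rfl
      rw [map_zero, zero_pow hn0, mul_zero] at hxz
      have hy : y = 0 := inj (by simpa using hxz.symm)
      subst hy
      simp at hst
    have key : y * b = a * z ^ n := by
      apply inj
      rw [map_mul, map_mul, map_pow, ← hxz, ← hxb]; ring
    have hpb : p ∣ b := (dvd_pow_self p hm0).trans hm1
    have hpa : ¬ p ∣ a := fun h' => hpab ⟨h', hpb⟩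
    have hpz : p ∣ z := by
      have hd : p ∣ a * z ^ n := key ▸ hpb.mul_left y
      rcases hp.dvd_mul.mp hd with h' | h'
      · exact absurd h' hpa
      · exact hp.dvd_of_dvd_pow h'
    have hpy : ¬ p ∣ y := fun hpy => hp.not_unit (isUnit_of_dvd_one
      (hst ▸ dvd_add (hpy.mul_left s) (hpz.mul_left t)))
    have e1 : emultiplicity p (y * b) = (m : ℕ∞) := by
      rw [emultiplicity_mul hp, emultiplicity_eq_zero.mpr hpy, zero_add,
        emultiplicity_eq_coe.mpr ⟨hm1, hm2⟩]
    have e2 : emultiplicity p (a * z ^ n) = (n : ℕ∞) * emultiplicity p z := by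
      rw [emultiplicity_mul hp, emultiplicity_eq_zero.mpr hpa, zero_add, emultiplicity_pow hp]
    have e3 : (m : ℕ∞) = (n : ℕ∞) * emultiplicity p z := by rw [← e1, key, e2]
    have hfin : emultiplicity p z ≠ ⊤ := by
      intro htop
      rw [htop, ENat.mul_top (by exact_mod_cast hn0)] at e3
      exact (ENat.coe_ne_top m) e3
    lift emultiplicity p z to ℕ using hfin with k hk
    exact ⟨k, by exact_mod_cast e3⟩
  · intro h
    set a := IsFractionRing.num R x with ha
    set b := IsFractionRing.den R x with hbdef
    have hred : IsRelPrime a (b : R) := IsFractionRing.num_den_reduced R x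
    have hxb : x * algebraMap R K (b : R) = algebraMap R K a :=
      IsFractionRing.num_mul_den_eq_num_iff_eq.mpr rfl
    have hb0 : (b : R) ≠ 0 := nonZeroDivisors.coe_ne_zero b
    have ha0 : a ≠ 0 := fun h0 => hx (IsFractionRing.eq_zero_of_num_eq_zero h0)
    have hdvd : ∀ p : R, Prime p → ∀ m : ℕ, p ^ m ∣ (b : R) → ¬ p ^ (m + 1) ∣ (b : R) → n ∣ m := by
      intro p hp m h1 h2
      rcases h p hp a b hb0 (fun hc => hp.not_unit (hred hc.1 hc.2)) hxb m h1 h2 with h0 | h0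
      · simp [h0]
      · exact h0
    obtain ⟨u, z, hu, hbz⟩ := aux_pow n (b : R) hb0 hdvd
    obtain ⟨v, hv⟩ := hu
    rw [← hv] at hbz
    set y : R := a * ((v⁻¹ : Rˣ) : R) with hy
    have hy0 : y ≠ 0 := mul_ne_zero ha0 (Units.ne_zero _)
    have hzb : z ^ n ∣ (b : R) := ⟨(v : R), by rw [hbz]; ring⟩
    refine ⟨y, z, ?_, ?_⟩
    · obtain ⟨d, s, t, hd, hdy, hdz, -⟩ := hgcd y z
      have hd0 : d ≠ 0 := fun h0 => hy0 (by simpa [h0] using hdy)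
      have hdu : IsUnit d := by
        by_contra hdu
        obtain ⟨q, hqirr, hqd⟩ := WfDvdMonoid.exists_irreducible_factor hdu hd0
        have hq : Prime q := UniqueFactorizationMonoid.irreducible_iff_prime.mp hqirr
        have hqa : q ∣ a := by
          have : y * (v : R) = a := by
            rw [hy, mul_assoc, Units.inv_mul, mul_one]
          exact this ▸ (hqd.trans hdy).mul_right (v : R)
        have hqb : q ∣ (b : R) :=
          ((hqd.trans hdz).trans (dvd_pow_self z hn0)).trans hzb
        exact hq.not_unit (hred hqa hqb)
      obtain ⟨e, he⟩ := hdu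
      refine ⟨((e⁻¹ : Rˣ) : R) * s, ((e⁻¹ : Rˣ) : R) * t, ?_⟩
      have : ((e⁻¹ : Rˣ) : R) * d = 1 := by rw [← he, Units.inv_mul]
      rw [mul_assoc, mul_assoc, ← mul_add, ← hd, this]
    · have hv0 : algebraMap R K (v : R) ≠ 0 :=
        fun h0 => Units.ne_zero v (inj (by rw [h0, map_zero]))
      apply mul_left_cancel₀ hv0
      have h1 : (v : R) * y = a := by rw [hy, mul_comm, mul_assoc, Units.inv_mul, mul_one]
      rw [← map_mul, h1, ← hxb, hbz, map_mul, map_pow]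
      ring
end

section
/- Let K be a number field, let 𝔭₁, …, 𝔭_k be distinct nonzero primes of O_K, and let J = ⋂ᵢ 𝔭ᵢ(O_K)_{𝔭ᵢ} ⊆ K. Then the set J·J = {xy : x, y ∈ J} equals ⋂ᵢ 𝔭ᵢ²(O_K)_{𝔭ᵢ}, i.e., the set of r ∈ K with v_{𝔭ᵢ}(r) ≥ 2 for all i (together with 0). -/
open IsDedekindDomain NumberField Classical

/-! Since `v_𝔭` is additive, `J·J` lies in the right-hand side. Conversely, the Chinese remainder
theorem gives `a ∈ O_K` congruent to a uniformizer of `𝔭ᵢ` modulo `𝔭ᵢ²` for every `i`, so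
`v_{𝔭ᵢ}(a) = 1` for all `i`, and any `r` with all `v_{𝔭ᵢ}(r) ≥ 2` factors as `a · (a⁻¹ r)`. -/

/-- The normalized `𝔭`-adic valuation of `r ∈ K`, valued in `WithTop ℤ` with the
convention `v_𝔭(0) = +∞`. -/
noncomputable def vT {K : Type*} [Field K] [NumberField K]
    (v : HeightOneSpectrum (𝓞 K)) (r : K) : WithTop ℤ :=
  if h : r = 0 then ⊤
  else ((-Multiplicative.toAdd (WithZero.unzero
    ((v.valuation (K := K)).ne_zero_iff.mpr h)) : ℤ) : WithTop ℤ)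

open WithZero

namespace IsDedekindDomain.HeightOneSpectrum

theorem exists_forall_intValuation_eq_exp_neg_one {R : Type*} [CommRing R] [IsDedekindDomain R]
    {ι : Type*} [Finite ι] (p : ι → HeightOneSpectrum R) (hp : Function.Injective p) :
    ∃ a : R, ∀ i, (p i).intValuation a = exp (-1 : ℤ) := by
  choose π hπ using fun i => (p i).intValuation_exists_uniformizer
  have hcoprime : Pairwise (Function.onFun IsCoprime fun i => (p i).asIdeal ^ 2) :=
    fun i j hij => (Ideal.isCoprime_of_isMaximal fun h => hij (hp (HeightOneSpectrum.ext h))).pow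
  obtain ⟨a, ha⟩ := Ideal.exists_forall_sub_mem_ideal hcoprime π
  refine ⟨a, fun i => ?_⟩
  have hlt : (p i).intValuation (a - π i) < (p i).intValuation (π i) := by
    calc (p i).intValuation (a - π i) ≤ exp (-((2 : ℕ) : ℤ)) :=
          ((p i).intValuation_le_pow_iff_mem _ 2).mpr (ha i)
      _ < exp (-1 : ℤ) := by rw [exp_lt_exp]; norm_num
      _ = (p i).intValuation (π i) := (hπ i).symm
  simpa [hπ i] using Valuation.map_add_eq_of_lt_left _ hlt

end IsDedekindDomain.HeightOneSpectrum

section vT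

variable {K : Type*} [Field K] [NumberField K] (v : HeightOneSpectrum (𝓞 K))

@[simp]
theorem vT_zero : vT v 0 = ⊤ := by simp [vT]

theorem vT_of_ne_zero {r : K} (hr : r ≠ 0) :
    vT v r = ((-log (v.valuation K r) : ℤ) : WithTop ℤ) := by
  rw [vT, dif_neg hr]
  conv_rhs => rw [← coe_unzero ((v.valuation K).ne_zero_iff.mpr hr)]
  rfl

theorem vT_of_valuation_eq_exp {r : K} {n : ℤ} (h : v.valuation K r = exp n) :
    vT v r = ((-n : ℤ) : WithTop ℤ) := by
  rw [vT_of_ne_zero v (by simp [← (v.valuation K).ne_zero_iff, h]), h, log_exp]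

theorem vT_mul (x y : K) : vT v (x * y) = vT v x + vT v y := by
  rcases eq_or_ne x 0 with rfl | hx
  · simp
  rcases eq_or_ne y 0 with rfl | hy
  · simp
  simp only [vT_of_ne_zero v hx, vT_of_ne_zero v hy, vT_of_ne_zero v (mul_ne_zero hx hy), map_mul]
  rw [log_mul (by simpa using hx) (by simpa using hy)]
  norm_cast
  ring

theorem vT_inv (x : K) : vT v x⁻¹ = -vT v x := by
  rcases eq_or_ne x 0 with rfl | hx
  · simp
  simp [vT_of_ne_zero v hx, vT_of_ne_zero v (inv_ne_zero hx), log_inv]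

theorem exists_ne_zero_forall_vT_eq_one {ι : Type*} [Finite ι]
    (p : ι → HeightOneSpectrum (𝓞 K)) (hp : Function.Injective p) :
    ∃ x : K, x ≠ 0 ∧ ∀ i, vT (p i) x = 1 := by
  rcases isEmpty_or_nonempty ι with _ | ⟨⟨i₀⟩⟩
  · exact ⟨1, one_ne_zero, isEmptyElim⟩
  obtain ⟨a, ha⟩ := HeightOneSpectrum.exists_forall_intValuation_eq_exp_neg_one p hp
  have hval : ∀ i, (p i).valuation K (algebraMap (𝓞 K) K a) = exp (-1 : ℤ) := fun i => by
    rw [HeightOneSpectrum.valuation_of_algebraMap, ha i]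
  refine ⟨algebraMap (𝓞 K) K a, fun h => ?_, fun i => vT_of_valuation_eq_exp _ (hval i)⟩
  exact exp_ne_zero ((hval i₀).symm.trans (by simp [h]))

end vT

/-- For distinct nonzero primes `𝔭₁, …, 𝔭_k` of `O_K` and
`J = ⋂ᵢ 𝔭ᵢ(O_K)_{𝔭ᵢ} = {r ∈ K : ∀ i, v_{𝔭ᵢ}(r) ≥ 1}`, the set of products
`J·J = {xy : x, y ∈ J}` equals `⋂ᵢ 𝔭ᵢ²(O_K)_{𝔭ᵢ} = {r ∈ K : ∀ i, v_{𝔭ᵢ}(r) ≥ 2}`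
(both sets containing `0`). -/
theorem stmt_16 {K : Type*} [Field K] [NumberField K] {k : ℕ}
    (p : Fin k → HeightOneSpectrum (𝓞 K)) (hp : Function.Injective p) :
    {r : K | ∃ x ∈ (⋂ i, {r : K | 1 ≤ vT (p i) r}), ∃ y ∈ (⋂ i, {r : K | 1 ≤ vT (p i) r}),
        r = x * y} =
      ⋂ i, {r : K | 2 ≤ vT (p i) r} := by
  ext r
  simp only [Set.mem_iInter, Set.mem_ofPred_eq, ← one_add_one_eq_two]
  constructor
  · rintro ⟨x, hx, y, hy, rfl⟩ i
    rw [vT_mul]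
    exact add_le_add (hx i) (hy i)
  · intro hr
    obtain ⟨x, hx0, hx⟩ := exists_ne_zero_forall_vT_eq_one p hp
    refine ⟨x, fun i => (hx i).ge, x⁻¹ * r, fun i => ?_, by field_simp⟩
    rw [vT_mul, vT_inv, hx i, ← add_le_add_iff_right_of_ne_top WithTop.one_ne_top,
      LinearOrderedAddCommGroupWithTop.add_neg_cancel_left_of_ne_top WithTop.one_ne_top]
    exact hr i
end
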